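/- arXiv:2209.11691 — 3 statements merged into one kernel-verified Lean document; each statement's English description precedes it below -/
import Mathlib

section
/- Let A ∈ ℝ^{N₁×N₂×N₃} have CP form A_{ijt} = Σ_{ℓ=1}^{L} φ⁽¹⁾_{iℓ} φ⁽²⁾_{jℓ} φ⁽³⁾_{tℓ}, and let W₁ ∈ ℝ^{N₁×N₁}, W₂ ∈ ℝ^{N₂×N₂}, W₃ ∈ ℝ^{N₃×N₃} be matrices. If for every ℓ ∈ {1,…,L} there exists some dimension n ∈ {1,2,3} such that W_n φ⁽ⁿ⁾_ℓ = φ⁽ⁿ⁾_ℓ (i.e., Σ_{j} W_{n,ij} φ⁽ⁿ⁾_{jℓ} = φ⁽ⁿ⁾_{iℓ} for all i), then the weighted-within transformed array A ×₁ (I−W₁) ×₂ (I−W₂) ×₃ (I−W₃) is identically zero. -/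
open Finset

/-- 1-mode product of a 3-tensor with a matrix. -/
def modeProd1 {N₁ N₂ N₃ P : ℕ} (A : Fin N₁ → Fin N₂ → Fin N₃ → ℝ)
    (M : Matrix (Fin P) (Fin N₁) ℝ) : Fin P → Fin N₂ → Fin N₃ → ℝ :=
  fun p j t => ∑ i, M p i * A i j t

/-- 2-mode product of a 3-tensor with a matrix. -/
def modeProd2 {N₁ N₂ N₃ P : ℕ} (A : Fin N₁ → Fin N₂ → Fin N₃ → ℝ)
    (M : Matrix (Fin P) (Fin N₂) ℝ) : Fin N₁ → Fin P → Fin N₃ → ℝ :=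
  fun i q t => ∑ j, M q j * A i j t

/-- 3-mode product of a 3-tensor with a matrix. -/
def modeProd3 {N₁ N₂ N₃ P : ℕ} (A : Fin N₁ → Fin N₂ → Fin N₃ → ℝ)
    (M : Matrix (Fin P) (Fin N₃) ℝ) : Fin N₁ → Fin N₂ → Fin P → ℝ :=
  fun i j r => ∑ t, M r t * A i j t

lemma oneSub_apply {N : ℕ} (W : Matrix (Fin N) (Fin N) ℝ) (v : Fin N → ℝ) (p : Fin N) :
    ∑ q, (1 - W) p q * v q = v p - W.mulVec v p := by
  simp [Matrix.sub_apply, sub_mul, Finset.sum_sub_distrib, Matrix.mulVec,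
    dotProduct, Matrix.one_apply, Finset.sum_ite_eq]

/-- if every CP component has some dimension in which the weight matrix
reproduces the corresponding factor vector, then the weighted-within transformed array
is identically zero. -/
theorem weightedWithin_annihilates_CP {N₁ N₂ N₃ L : ℕ}
    (φ1 : Fin L → Fin N₁ → ℝ) (φ2 : Fin L → Fin N₂ → ℝ) (φ3 : Fin L → Fin N₃ → ℝ)
    (A : Fin N₁ → Fin N₂ → Fin N₃ → ℝ)
    (hA : ∀ i j t, A i j t = ∑ ℓ, φ1 ℓ i * φ2 ℓ j * φ3 ℓ t)
    (W₁ : Matrix (Fin N₁) (Fin N₁) ℝ) (W₂ : Matrix (Fin N₂) (Fin N₂) ℝ)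
    (W₃ : Matrix (Fin N₃) (Fin N₃) ℝ)
    (hW : ∀ ℓ, W₁.mulVec (φ1 ℓ) = φ1 ℓ ∨ W₂.mulVec (φ2 ℓ) = φ2 ℓ ∨
      W₃.mulVec (φ3 ℓ) = φ3 ℓ) :
    ∀ i j t, modeProd3 (modeProd2 (modeProd1 A (1 - W₁)) (1 - W₂)) (1 - W₃) i j t = 0 := by
  intro i j t
  have h1 : ∀ p j' t', modeProd1 A (1 - W₁) p j' t'
      = ∑ ℓ, (φ1 ℓ p - W₁.mulVec (φ1 ℓ) p) * φ2 ℓ j' * φ3 ℓ t' := by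
    intro p j' t'
    simp only [modeProd1, hA, Finset.mul_sum]
    rw [Finset.sum_comm]
    refine Finset.sum_congr rfl fun ℓ _ => ?_
    rw [← oneSub_apply W₁ (φ1 ℓ) p, Finset.sum_mul, Finset.sum_mul]
    exact Finset.sum_congr rfl fun i' _ => by ring
  have h2 : ∀ p q t', modeProd2 (modeProd1 A (1 - W₁)) (1 - W₂) p q t'
      = ∑ ℓ, (φ1 ℓ p - W₁.mulVec (φ1 ℓ) p) * (φ2 ℓ q - W₂.mulVec (φ2 ℓ) q) * φ3 ℓ t' := by
    intro p q t'
    simp only [modeProd2, h1, Finset.mul_sum]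
    rw [Finset.sum_comm]
    refine Finset.sum_congr rfl fun ℓ _ => ?_
    rw [← oneSub_apply W₂ (φ2 ℓ) q, Finset.mul_sum, Finset.sum_mul]
    refine Finset.sum_congr rfl fun j' _ => by ring
  have h3 : modeProd3 (modeProd2 (modeProd1 A (1 - W₁)) (1 - W₂)) (1 - W₃) i j t
      = ∑ ℓ, (φ1 ℓ i - W₁.mulVec (φ1 ℓ) i) * (φ2 ℓ j - W₂.mulVec (φ2 ℓ) j)
          * (φ3 ℓ t - W₃.mulVec (φ3 ℓ) t) := by
    simp only [modeProd3, h2, Finset.mul_sum]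
    rw [Finset.sum_comm]
    refine Finset.sum_congr rfl fun ℓ _ => ?_
    rw [← oneSub_apply W₃ (φ3 ℓ) t, Finset.mul_sum]
    refine Finset.sum_congr rfl fun t' _ => by ring
  rw [h3]
  refine Finset.sum_eq_zero fun ℓ _ => ?_
  rcases hW ℓ with h | h | h
  · rw [h]; ring
  · rw [h]; ring
  · rw [h]; ring
end

section
/- For any matrices a ∈ ℝ^{N₁×N₂}, b ∈ ℝ^{N₁×N₃}, c ∈ ℝ^{N₂×N₃}, the array A ∈ ℝ^{N₁×N₂×N₃} defined by A_{ijt} = a_{ij} + b_{it} + c_{jt} has CP form of rank at most L = min{N₁,N₂} + min{N₁,N₃} + min{N₂,N₃}: there exist vectors φ⁽¹⁾_ℓ ∈ ℝ^{N₁}, φ⁽²⁾_ℓ ∈ ℝ^{N₂}, φ⁽³⁾_ℓ ∈ ℝ^{N₃} (ℓ = 1,…,L) with A_{ijt} = Σ_{ℓ=1}^{L} φ⁽¹⁾_{iℓ} φ⁽²⁾_{jℓ} φ⁽³⁾_{tℓ} for all i, j, t. -/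
open Finset

lemma decomp_min (m n : ℕ) (M : Fin m → Fin n → ℝ) :
    ∃ (u : Fin (min m n) → Fin m → ℝ) (v : Fin (min m n) → Fin n → ℝ),
      ∀ i j, M i j = ∑ ℓ, u ℓ i * v ℓ j := by
  rcases le_total m n with h | h
  · have e : Fin (min m n) ≃ Fin m := finCongr (min_eq_left h)
    refine ⟨fun ℓ i => if e ℓ = i then 1 else 0, fun ℓ j => M (e ℓ) j, fun i j => ?_⟩
    rw [Fintype.sum_equiv e (fun ℓ => (if e ℓ = i then 1 else 0) * M (e ℓ) j)
      (fun k => (if k = i then 1 else 0) * M k j) (fun ℓ => by simp)]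
    simp [ite_mul]
  · have e : Fin (min m n) ≃ Fin n := finCongr (min_eq_right h)
    refine ⟨fun ℓ i => M i (e ℓ), fun ℓ j => if e ℓ = j then 1 else 0, fun i j => ?_⟩
    rw [Fintype.sum_equiv e (fun ℓ => M i (e ℓ) * if e ℓ = j then 1 else 0)
      (fun k => M i k * if k = j then 1 else 0) (fun ℓ => by simp)]
    simp [mul_ite]

/-- any additive array `A i j t = a i j + b i t + c j t` has CP form of
rank at most `min N₁ N₂ + min N₁ N₃ + min N₂ N₃`. -/
theorem additive_hasCPForm {N₁ N₂ N₃ : ℕ}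
    (a : Fin N₁ → Fin N₂ → ℝ) (b : Fin N₁ → Fin N₃ → ℝ) (c : Fin N₂ → Fin N₃ → ℝ)
    (A : Fin N₁ → Fin N₂ → Fin N₃ → ℝ)
    (hA : ∀ i j t, A i j t = a i j + b i t + c j t) :
    ∃ (φ1 : Fin (min N₁ N₂ + min N₁ N₃ + min N₂ N₃) → Fin N₁ → ℝ)
      (φ2 : Fin (min N₁ N₂ + min N₁ N₃ + min N₂ N₃) → Fin N₂ → ℝ)
      (φ3 : Fin (min N₁ N₂ + min N₁ N₃ + min N₂ N₃) → Fin N₃ → ℝ),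
      ∀ i j t, A i j t = ∑ ℓ, φ1 ℓ i * φ2 ℓ j * φ3 ℓ t := by
  obtain ⟨u1, v1, h1⟩ := decomp_min N₁ N₂ a
  obtain ⟨u2, v2, h2⟩ := decomp_min N₁ N₃ b
  obtain ⟨u3, v3, h3⟩ := decomp_min N₂ N₃ c
  refine ⟨Fin.addCases (Fin.addCases u1 u2) (fun _ _ => 1),
          Fin.addCases (Fin.addCases v1 (fun _ _ => 1)) u3,
          Fin.addCases (Fin.addCases (fun _ _ => 1) v2) v3, fun i j t => ?_⟩
  rw [Fin.sum_univ_add, Fin.sum_univ_add]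
  simp only [Fin.addCases_left, Fin.addCases_right]
  rw [hA, h1, h2, h3]
  ring_nf
end

section
/- (Master deterministic inequality underlying Proposition 3.2.) Let W₁ ∈ ℝ^{N₁×N₁}, W₂ ∈ ℝ^{N₂×N₂}, W₃ ∈ ℝ^{N₃×N₃} have nonnegative entries with each row summing to 1. Let A ∈ ℝ^{N₁×N₂×N₃} have CP form A_{ijt} = Σ_{ℓ=1}^{L} φ⁽¹⁾_{iℓ} φ⁽²⁾_{jℓ} φ⁽³⁾_{tℓ}, let à := A ×₁ (I−W₁) ×₂ (I−W₂) ×₃ (I−W₃), let X ∈ ℝ^{N₁×N₂×N₃} be arbitrary, and set N := N₁N₂N₃. Writing φ⁽ⁿ⁾_i ∈ ℝ^L for the vector (φ⁽ⁿ⁾_{iℓ})_{ℓ=1}^{L}, one has: (1/N) | Σ_{i,j,t} X_{ijt} Ã_{ijt} | ≤ √L · ( (1/N) Σ_{i,j,t} X_{ijt}² )^{1/2} · Π_{n=1}^{3} ( (1/N_n) Σ_{i,j=1}^{N_n} W_{n,ij} ‖φ⁽ⁿ⁾_i − φ⁽ⁿ⁾_j‖² )^{1/2}. -/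
open Finset

private lemma sum_one_sub_mul {n : ℕ} (W : Matrix (Fin n) (Fin n) ℝ) (f : Fin n → ℝ)
    (i : Fin n) : ∑ j, (1 - W) i j * f j = f i - ∑ j, W i j * f j := by
  simp [Matrix.sub_apply, Matrix.one_apply, sub_mul, Finset.sum_sub_distrib, ite_mul]

private lemma jensen_sq {n : ℕ} (w f : Fin n → ℝ) (hw : ∀ j, 0 ≤ w j)
    (hw1 : ∑ j, w j = 1) : (∑ j, w j * f j) ^ 2 ≤ ∑ j, w j * f j ^ 2 := by
  have cs := Finset.sum_mul_sq_le_sq_mul_sq Finset.univ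
    (fun j => Real.sqrt (w j)) (fun j => Real.sqrt (w j) * f j)
  have e1 : ∀ j, Real.sqrt (w j) * (Real.sqrt (w j) * f j) = w j * f j := fun j => by
    rw [← mul_assoc, Real.mul_self_sqrt (hw j)]
  have e2 : ∀ j, (Real.sqrt (w j) * f j) ^ 2 = w j * f j ^ 2 := fun j => by
    rw [mul_pow, Real.sq_sqrt (hw j)]
  have e3 : ∀ j, (Real.sqrt (w j)) ^ 2 = w j := fun j => Real.sq_sqrt (hw j)
  simp only [e1, e2, e3] at cs
  rwa [hw1, one_mul] at cs

private lemma sum3_factor {n1 n2 n3 : ℕ} (a : Fin n1 → ℝ) (b : Fin n2 → ℝ) (c : Fin n3 → ℝ) :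
    ∑ i, ∑ j, ∑ t, a i * (b j * c t) = (∑ i, a i) * ((∑ j, b j) * (∑ t, c t)) := by
  simp_rw [Finset.sum_mul, Finset.mul_sum]

private lemma sum_swap3 {n1 n2 m : ℕ} (f : Fin n1 → Fin n2 → Fin m → ℝ) :
    ∑ i, ∑ j, ∑ ℓ, f i j ℓ = ∑ ℓ, ∑ i, ∑ j, f i j ℓ := by
  calc ∑ i, ∑ j, ∑ ℓ, f i j ℓ = ∑ i, ∑ ℓ, ∑ j, f i j ℓ :=
        Finset.sum_congr rfl fun i _ => Finset.sum_comm
    _ = _ := Finset.sum_comm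

private lemma sum_swap4 {n1 n2 n3 m : ℕ} (f : Fin n1 → Fin n2 → Fin n3 → Fin m → ℝ) :
    ∑ i, ∑ j, ∑ t, ∑ ℓ, f i j t ℓ = ∑ ℓ, ∑ i, ∑ j, ∑ t, f i j t ℓ := by
  calc ∑ i, ∑ j, ∑ t, ∑ ℓ, f i j t ℓ = ∑ i, ∑ ℓ, ∑ j, ∑ t, f i j t ℓ :=
        Finset.sum_congr rfl fun i _ => sum_swap3 _
    _ = _ := Finset.sum_comm

private lemma abs_sum_mul_le {ι : Type*} [Fintype ι] (f g : ι → ℝ) :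
    |∑ i, f i * g i| ≤ Real.sqrt (∑ i, f i ^ 2) * Real.sqrt (∑ i, g i ^ 2) := by
  rw [abs_le]
  constructor
  · have h2 := Real.sum_mul_le_sqrt_mul_sqrt Finset.univ (fun i => -f i) g
    simp only [neg_mul, Finset.sum_neg_distrib, neg_sq] at h2
    linarith
  · exact Real.sum_mul_le_sqrt_mul_sqrt _ _ _

/-- master deterministic inequality underlying Proposition 3.2. -/
theorem master_inequality {N₁ N₂ N₃ L : ℕ}
    (W₁ : Matrix (Fin N₁) (Fin N₁) ℝ) (W₂ : Matrix (Fin N₂) (Fin N₂) ℝ)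
    (W₃ : Matrix (Fin N₃) (Fin N₃) ℝ)
    (hW₁ : ∀ i j, 0 ≤ W₁ i j) (hW₂ : ∀ i j, 0 ≤ W₂ i j) (hW₃ : ∀ i j, 0 ≤ W₃ i j)
    (hW₁row : ∀ i, ∑ j, W₁ i j = 1) (hW₂row : ∀ i, ∑ j, W₂ i j = 1)
    (hW₃row : ∀ i, ∑ j, W₃ i j = 1)
    (φ1 : Fin L → Fin N₁ → ℝ) (φ2 : Fin L → Fin N₂ → ℝ) (φ3 : Fin L → Fin N₃ → ℝ)
    (A : Fin N₁ → Fin N₂ → Fin N₃ → ℝ)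
    (hA : ∀ i j t, A i j t = ∑ ℓ, φ1 ℓ i * φ2 ℓ j * φ3 ℓ t)
    (Atil : Fin N₁ → Fin N₂ → Fin N₃ → ℝ)
    (hAtil : Atil = modeProd3 (modeProd2 (modeProd1 A (1 - W₁)) (1 - W₂)) (1 - W₃))
    (X : Fin N₁ → Fin N₂ → Fin N₃ → ℝ)
    (v1 : Fin N₁ → EuclideanSpace ℝ (Fin L))
    (hv1 : ∀ i, v1 i = (WithLp.equiv 2 (Fin L → ℝ)).symm (fun ℓ => φ1 ℓ i))
    (v2 : Fin N₂ → EuclideanSpace ℝ (Fin L))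
    (hv2 : ∀ j, v2 j = (WithLp.equiv 2 (Fin L → ℝ)).symm (fun ℓ => φ2 ℓ j))
    (v3 : Fin N₃ → EuclideanSpace ℝ (Fin L))
    (hv3 : ∀ t, v3 t = (WithLp.equiv 2 (Fin L → ℝ)).symm (fun ℓ => φ3 ℓ t)) :
    (1 / ((N₁ : ℝ) * N₂ * N₃)) * |∑ i, ∑ j, ∑ t, X i j t * Atil i j t|
      ≤ Real.sqrt L
        * Real.sqrt ((1 / ((N₁ : ℝ) * N₂ * N₃)) * ∑ i, ∑ j, ∑ t, X i j t ^ 2)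
        * (Real.sqrt ((1 / (N₁ : ℝ)) * ∑ i, ∑ j, W₁ i j * ‖v1 i - v1 j‖ ^ 2)
          * Real.sqrt ((1 / (N₂ : ℝ)) * ∑ i, ∑ j, W₂ i j * ‖v2 i - v2 j‖ ^ 2)
          * Real.sqrt ((1 / (N₃ : ℝ)) * ∑ i, ∑ j, W₃ i j * ‖v3 i - v3 j‖ ^ 2)) := by
  classical
  by_cases h0 : N₁ = 0 ∨ N₂ = 0 ∨ N₃ = 0
  · have hS0 : ∑ i, ∑ j, ∑ t, X i j t * Atil i j t = 0 := by
      rcases h0 with h | h | h <;> subst h <;> simp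
    rw [hS0, abs_zero, mul_zero]
    positivity
  push_neg at h0
  obtain ⟨hN1, hN2, hN3⟩ := h0
  have hn1 : (0:ℝ) < N₁ := by exact_mod_cast Nat.pos_of_ne_zero hN1
  have hn2 : (0:ℝ) < N₂ := by exact_mod_cast Nat.pos_of_ne_zero hN2
  have hn3 : (0:ℝ) < N₃ := by exact_mod_cast Nat.pos_of_ne_zero hN3
  -- difference vectors
  set d1 : Fin L → Fin N₁ → ℝ := fun ℓ i => φ1 ℓ i - ∑ j, W₁ i j * φ1 ℓ j with hd1def
  set d2 : Fin L → Fin N₂ → ℝ := fun ℓ j => φ2 ℓ j - ∑ j', W₂ j j' * φ2 ℓ j' with hd2def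
  set d3 : Fin L → Fin N₃ → ℝ := fun ℓ t => φ3 ℓ t - ∑ t', W₃ t t' * φ3 ℓ t' with hd3def
  have hd1' : ∀ ℓ i, d1 ℓ i = ∑ j, W₁ i j * (φ1 ℓ i - φ1 ℓ j) := by
    intro ℓ i
    rw [eq_comm]
    calc ∑ j, W₁ i j * (φ1 ℓ i - φ1 ℓ j)
        = (∑ j, W₁ i j) * φ1 ℓ i - ∑ j, W₁ i j * φ1 ℓ j := by
          rw [Finset.sum_mul, ← Finset.sum_sub_distrib]
          exact Finset.sum_congr rfl fun j _ => by ring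
      _ = d1 ℓ i := by rw [hW₁row, one_mul, hd1def]
  have hd2' : ∀ ℓ j, d2 ℓ j = ∑ j', W₂ j j' * (φ2 ℓ j - φ2 ℓ j') := by
    intro ℓ j
    rw [eq_comm]
    calc ∑ j', W₂ j j' * (φ2 ℓ j - φ2 ℓ j')
        = (∑ j', W₂ j j') * φ2 ℓ j - ∑ j', W₂ j j' * φ2 ℓ j' := by
          rw [Finset.sum_mul, ← Finset.sum_sub_distrib]
          exact Finset.sum_congr rfl fun j' _ => by ring
      _ = d2 ℓ j := by rw [hW₂row, one_mul, hd2def]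
  have hd3' : ∀ ℓ t, d3 ℓ t = ∑ t', W₃ t t' * (φ3 ℓ t - φ3 ℓ t') := by
    intro ℓ t
    rw [eq_comm]
    calc ∑ t', W₃ t t' * (φ3 ℓ t - φ3 ℓ t')
        = (∑ t', W₃ t t') * φ3 ℓ t - ∑ t', W₃ t t' * φ3 ℓ t' := by
          rw [Finset.sum_mul, ← Finset.sum_sub_distrib]
          exact Finset.sum_congr rfl fun t' _ => by ring
      _ = d3 ℓ t := by rw [hW₃row, one_mul, hd3def]
  -- mode product computations
  have e1 : ∀ i j t, modeProd1 A (1 - W₁) i j t = ∑ ℓ, d1 ℓ i * (φ2 ℓ j * φ3 ℓ t) := by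
    intro i j t
    have h1 : modeProd1 A (1 - W₁) i j t = A i j t - ∑ i', W₁ i i' * A i' j t :=
      sum_one_sub_mul W₁ (fun i' => A i' j t) i
    have h2 : ∑ i', W₁ i i' * A i' j t
        = ∑ ℓ, (∑ i', W₁ i i' * φ1 ℓ i') * (φ2 ℓ j * φ3 ℓ t) := by
      simp only [hA, Finset.mul_sum]
      rw [Finset.sum_comm]
      refine Finset.sum_congr rfl fun ℓ _ => ?_
      rw [Finset.sum_mul]
      exact Finset.sum_congr rfl fun i' _ => by ring
    rw [h1, hA, h2, ← Finset.sum_sub_distrib]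
    refine Finset.sum_congr rfl fun ℓ _ => ?_
    simp only [hd1def]
    ring
  have e2 : ∀ i j t, modeProd2 (modeProd1 A (1 - W₁)) (1 - W₂) i j t
      = ∑ ℓ, d1 ℓ i * (d2 ℓ j * φ3 ℓ t) := by
    intro i j t
    have h1 : modeProd2 (modeProd1 A (1 - W₁)) (1 - W₂) i j t
        = modeProd1 A (1 - W₁) i j t - ∑ j', W₂ j j' * modeProd1 A (1 - W₁) i j' t :=
      sum_one_sub_mul W₂ (fun j' => modeProd1 A (1 - W₁) i j' t) j
    have h2 : ∑ j', W₂ j j' * modeProd1 A (1 - W₁) i j' t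
        = ∑ ℓ, d1 ℓ i * ((∑ j', W₂ j j' * φ2 ℓ j') * φ3 ℓ t) := by
      simp only [e1, Finset.mul_sum]
      rw [Finset.sum_comm]
      refine Finset.sum_congr rfl fun ℓ _ => ?_
      rw [Finset.sum_mul, Finset.mul_sum]
      exact Finset.sum_congr rfl fun j' _ => by ring
    rw [h1, e1, h2, ← Finset.sum_sub_distrib]
    refine Finset.sum_congr rfl fun ℓ _ => ?_
    simp only [hd2def]
    ring
  have e3 : ∀ i j t, Atil i j t = ∑ ℓ, d1 ℓ i * (d2 ℓ j * d3 ℓ t) := by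
    intro i j t
    have h1 : Atil i j t
        = modeProd2 (modeProd1 A (1 - W₁)) (1 - W₂) i j t
          - ∑ t', W₃ t t' * modeProd2 (modeProd1 A (1 - W₁)) (1 - W₂) i j t' := by
      rw [hAtil]
      exact sum_one_sub_mul W₃ (fun t' => modeProd2 (modeProd1 A (1 - W₁)) (1 - W₂) i j t') t
    have h2 : ∑ t', W₃ t t' * modeProd2 (modeProd1 A (1 - W₁)) (1 - W₂) i j t'
        = ∑ ℓ, d1 ℓ i * (d2 ℓ j * (∑ t', W₃ t t' * φ3 ℓ t')) := by
      simp only [e2, Finset.mul_sum]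
      rw [Finset.sum_comm]
      refine Finset.sum_congr rfl fun ℓ _ => ?_
      exact Finset.sum_congr rfl fun t' _ => by ring
    rw [h1, e2, h2, ← Finset.sum_sub_distrib]
    refine Finset.sum_congr rfl fun ℓ _ => ?_
    simp only [hd3def]
    ring
  -- abbreviations
  set SX : ℝ := ∑ i, ∑ j, ∑ t, X i j t ^ 2 with hSXdef
  set E1 : ℝ := ∑ i, ∑ j, W₁ i j * ‖v1 i - v1 j‖ ^ 2 with hE1def
  set E2 : ℝ := ∑ i, ∑ j, W₂ i j * ‖v2 i - v2 j‖ ^ 2 with hE2def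
  set E3 : ℝ := ∑ i, ∑ j, W₃ i j * ‖v3 i - v3 j‖ ^ 2 with hE3def
  set D1 : Fin L → ℝ := fun ℓ => ∑ i, ∑ j, W₁ i j * (φ1 ℓ i - φ1 ℓ j) ^ 2 with hD1def
  set D2 : Fin L → ℝ := fun ℓ => ∑ i, ∑ j, W₂ i j * (φ2 ℓ i - φ2 ℓ j) ^ 2 with hD2def
  set D3 : Fin L → ℝ := fun ℓ => ∑ i, ∑ j, W₃ i j * (φ3 ℓ i - φ3 ℓ j) ^ 2 with hD3def
  have hD1nn : ∀ ℓ, 0 ≤ D1 ℓ := fun ℓ => Finset.sum_nonneg fun i _ =>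
    Finset.sum_nonneg fun j _ => mul_nonneg (hW₁ i j) (sq_nonneg _)
  have hD2nn : ∀ ℓ, 0 ≤ D2 ℓ := fun ℓ => Finset.sum_nonneg fun i _ =>
    Finset.sum_nonneg fun j _ => mul_nonneg (hW₂ i j) (sq_nonneg _)
  have hD3nn : ∀ ℓ, 0 ≤ D3 ℓ := fun ℓ => Finset.sum_nonneg fun i _ =>
    Finset.sum_nonneg fun j _ => mul_nonneg (hW₃ i j) (sq_nonneg _)
  have hSXnn : 0 ≤ SX := Finset.sum_nonneg fun i _ => Finset.sum_nonneg fun j _ =>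
    Finset.sum_nonneg fun t _ => sq_nonneg _
  -- E = ∑ D
  have hnormgen : ∀ (n : ℕ) (φ : Fin L → Fin n → ℝ) (v : Fin n → EuclideanSpace ℝ (Fin L)),
      (∀ i, v i = (WithLp.equiv 2 (Fin L → ℝ)).symm (fun ℓ => φ ℓ i)) →
      ∀ i j, ‖v i - v j‖ ^ 2 = ∑ ℓ, (φ ℓ i - φ ℓ j) ^ 2 := by
    intro n φ v hv i j
    rw [EuclideanSpace.norm_eq, Real.sq_sqrt (Finset.sum_nonneg fun ℓ _ => sq_nonneg _)]
    refine Finset.sum_congr rfl fun ℓ _ => ?_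
    rw [PiLp.sub_apply, hv, hv, WithLp.equiv_symm_apply, PiLp.toLp_apply, PiLp.toLp_apply,
      Real.norm_eq_abs, sq_abs]
  have hE1eq : E1 = ∑ ℓ, D1 ℓ := by
    rw [hE1def]
    simp only [hnormgen N₁ φ1 v1 hv1, Finset.mul_sum]
    rw [sum_swap3]
  have hE2eq : E2 = ∑ ℓ, D2 ℓ := by
    rw [hE2def]
    simp only [hnormgen N₂ φ2 v2 hv2, Finset.mul_sum]
    rw [sum_swap3]
  have hE3eq : E3 = ∑ ℓ, D3 ℓ := by
    rw [hE3def]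
    simp only [hnormgen N₃ φ3 v3 hv3, Finset.mul_sum]
    rw [sum_swap3]
  have hE1nn : 0 ≤ E1 := hE1eq ▸ Finset.sum_nonneg fun ℓ _ => hD1nn ℓ
  have hE2nn : 0 ≤ E2 := hE2eq ▸ Finset.sum_nonneg fun ℓ _ => hD2nn ℓ
  have hE3nn : 0 ≤ E3 := hE3eq ▸ Finset.sum_nonneg fun ℓ _ => hD3nn ℓ
  -- split S over ℓ
  have hS : ∑ i, ∑ j, ∑ t, X i j t * Atil i j t
      = ∑ ℓ, ∑ i, ∑ j, ∑ t, X i j t * (d1 ℓ i * (d2 ℓ j * d3 ℓ t)) := by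
    simp only [e3, Finset.mul_sum]
    exact sum_swap4 _
  -- per-ℓ Cauchy–Schwarz
  have hB1 : ∀ ℓ, ∑ i, d1 ℓ i ^ 2 ≤ D1 ℓ := by
    intro ℓ
    refine Finset.sum_le_sum fun i _ => ?_
    rw [hd1' ℓ i]
    exact jensen_sq _ _ (hW₁ i) (hW₁row i)
  have hB2 : ∀ ℓ, ∑ j, d2 ℓ j ^ 2 ≤ D2 ℓ := by
    intro ℓ
    refine Finset.sum_le_sum fun j _ => ?_
    rw [hd2' ℓ j]
    exact jensen_sq _ _ (hW₂ j) (hW₂row j)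
  have hB3 : ∀ ℓ, ∑ t, d3 ℓ t ^ 2 ≤ D3 ℓ := by
    intro ℓ
    refine Finset.sum_le_sum fun t _ => ?_
    rw [hd3' ℓ t]
    exact jensen_sq _ _ (hW₃ t) (hW₃row t)
  have hT : ∀ ℓ, |∑ i, ∑ j, ∑ t, X i j t * (d1 ℓ i * (d2 ℓ j * d3 ℓ t))|
      ≤ Real.sqrt SX * (Real.sqrt (D1 ℓ) * (Real.sqrt (D2 ℓ) * Real.sqrt (D3 ℓ))) := by
    intro ℓ
    have h := abs_sum_mul_le (ι := Fin N₁ × Fin N₂ × Fin N₃)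
      (fun p => X p.1 p.2.1 p.2.2) (fun p => d1 ℓ p.1 * (d2 ℓ p.2.1 * d3 ℓ p.2.2))
    simp only [Fintype.sum_prod_type] at h
    have hg : ∑ i, ∑ j, ∑ t, (d1 ℓ i * (d2 ℓ j * d3 ℓ t)) ^ 2
        = (∑ i, d1 ℓ i ^ 2) * ((∑ j, d2 ℓ j ^ 2) * (∑ t, d3 ℓ t ^ 2)) := by
      rw [← sum3_factor]
      exact Finset.sum_congr rfl fun i _ => Finset.sum_congr rfl fun j _ =>
        Finset.sum_congr rfl fun t _ => by ring
    rw [hg] at h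
    refine h.trans ?_
    have hs1 : Real.sqrt ((∑ i, d1 ℓ i ^ 2) * ((∑ j, d2 ℓ j ^ 2) * (∑ t, d3 ℓ t ^ 2)))
        ≤ Real.sqrt (D1 ℓ) * (Real.sqrt (D2 ℓ) * Real.sqrt (D3 ℓ)) := by
      rw [Real.sqrt_mul (Finset.sum_nonneg fun i _ => sq_nonneg _),
        Real.sqrt_mul (Finset.sum_nonneg fun j _ => sq_nonneg _)]
      have m1 := Real.sqrt_le_sqrt (hB1 ℓ)
      have m2 := Real.sqrt_le_sqrt (hB2 ℓ)
      have m3 := Real.sqrt_le_sqrt (hB3 ℓ)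
      have := mul_le_mul m2 m3 (Real.sqrt_nonneg _) (Real.sqrt_nonneg _)
      exact mul_le_mul m1 this (by positivity) (Real.sqrt_nonneg _)
    exact mul_le_mul_of_nonneg_left hs1 (Real.sqrt_nonneg _)
  -- sum over ℓ with Cauchy–Schwarz in ℓ
  have hsumD : ∑ ℓ, Real.sqrt (D1 ℓ) * (Real.sqrt (D2 ℓ) * Real.sqrt (D3 ℓ))
      ≤ Real.sqrt E1 * (Real.sqrt E2 * Real.sqrt E3) := by
    have cs := Real.sum_mul_le_sqrt_mul_sqrt Finset.univ
      (fun ℓ => Real.sqrt (D1 ℓ)) (fun ℓ => Real.sqrt (D2 ℓ) * Real.sqrt (D3 ℓ))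
    have eq1 : ∀ ℓ : Fin L, (Real.sqrt (D1 ℓ)) ^ 2 = D1 ℓ := fun ℓ => Real.sq_sqrt (hD1nn ℓ)
    have eq2 : ∀ ℓ : Fin L, (Real.sqrt (D2 ℓ) * Real.sqrt (D3 ℓ)) ^ 2 = D2 ℓ * D3 ℓ := by
      intro ℓ
      rw [mul_pow, Real.sq_sqrt (hD2nn ℓ), Real.sq_sqrt (hD3nn ℓ)]
    simp only [eq1, eq2] at cs
    refine cs.trans ?_
    have h23 : ∑ ℓ, D2 ℓ * D3 ℓ ≤ (∑ ℓ, D2 ℓ) * (∑ ℓ, D3 ℓ) := by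
      calc ∑ ℓ, D2 ℓ * D3 ℓ ≤ ∑ ℓ, D2 ℓ * (∑ ℓ', D3 ℓ') :=
            Finset.sum_le_sum fun ℓ _ => mul_le_mul_of_nonneg_left
              (Finset.single_le_sum (fun ℓ' _ => hD3nn ℓ') (Finset.mem_univ ℓ)) (hD2nn ℓ)
        _ = (∑ ℓ, D2 ℓ) * (∑ ℓ, D3 ℓ) := by rw [← Finset.sum_mul]
    have hh : Real.sqrt (∑ ℓ, D2 ℓ * D3 ℓ) ≤ Real.sqrt (∑ ℓ, D2 ℓ) * Real.sqrt (∑ ℓ, D3 ℓ) := by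
      have := Real.sqrt_le_sqrt h23
      rwa [Real.sqrt_mul (Finset.sum_nonneg fun ℓ _ => hD2nn ℓ)] at this
    rw [hE1eq, hE2eq, hE3eq]
    exact mul_le_mul_of_nonneg_left hh (Real.sqrt_nonneg _)
  -- core inequality
  have core0 : |∑ i, ∑ j, ∑ t, X i j t * Atil i j t|
      ≤ Real.sqrt SX * (Real.sqrt E1 * (Real.sqrt E2 * Real.sqrt E3)) := by
    rw [hS]
    calc |∑ ℓ, ∑ i, ∑ j, ∑ t, X i j t * (d1 ℓ i * (d2 ℓ j * d3 ℓ t))|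
        ≤ ∑ ℓ, |∑ i, ∑ j, ∑ t, X i j t * (d1 ℓ i * (d2 ℓ j * d3 ℓ t))| :=
          Finset.abs_sum_le_sum_abs _ _
      _ ≤ ∑ ℓ, Real.sqrt SX * (Real.sqrt (D1 ℓ) * (Real.sqrt (D2 ℓ) * Real.sqrt (D3 ℓ))) :=
          Finset.sum_le_sum fun ℓ _ => hT ℓ
      _ = Real.sqrt SX * ∑ ℓ, Real.sqrt (D1 ℓ) * (Real.sqrt (D2 ℓ) * Real.sqrt (D3 ℓ)) := by
          rw [Finset.mul_sum]
      _ ≤ Real.sqrt SX * (Real.sqrt E1 * (Real.sqrt E2 * Real.sqrt E3)) :=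
          mul_le_mul_of_nonneg_left hsumD (Real.sqrt_nonneg _)
  have core : |∑ i, ∑ j, ∑ t, X i j t * Atil i j t|
      ≤ Real.sqrt L * (Real.sqrt SX * (Real.sqrt E1 * (Real.sqrt E2 * Real.sqrt E3))) := by
    rcases Nat.eq_zero_or_pos L with hL | hL
    · subst hL
      have hE10 : E1 = 0 := by rw [hE1eq]; simp
      have : |∑ i, ∑ j, ∑ t, X i j t * Atil i j t| ≤ 0 := by
        have := core0
        rw [hE10, Real.sqrt_zero, zero_mul, mul_zero] at this
        exact this
      exact this.trans (mul_nonneg (Real.sqrt_nonneg _) (mul_nonneg (Real.sqrt_nonneg _)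
        (mul_nonneg (Real.sqrt_nonneg _) (mul_nonneg (Real.sqrt_nonneg _) (Real.sqrt_nonneg _)))))
    · have h1L : (1:ℝ) ≤ Real.sqrt L := Real.one_le_sqrt.2 (by exact_mod_cast hL)
      calc |∑ i, ∑ j, ∑ t, X i j t * Atil i j t|
          ≤ Real.sqrt SX * (Real.sqrt E1 * (Real.sqrt E2 * Real.sqrt E3)) := core0
        _ ≤ Real.sqrt L * (Real.sqrt SX * (Real.sqrt E1 * (Real.sqrt E2 * Real.sqrt E3))) :=
            le_mul_of_one_le_left (mul_nonneg (Real.sqrt_nonneg _) (mul_nonneg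
              (Real.sqrt_nonneg _) (mul_nonneg (Real.sqrt_nonneg _) (Real.sqrt_nonneg _)))) h1L
  -- algebra on the right-hand side
  have hsq : Real.sqrt ((1 / ((N₁ : ℝ) * N₂ * N₃)) * SX)
      = (Real.sqrt N₁)⁻¹ * (Real.sqrt N₂)⁻¹ * (Real.sqrt N₃)⁻¹ * Real.sqrt SX := by
    rw [one_div, mul_inv, mul_inv, Real.sqrt_mul (by positivity) SX,
      Real.sqrt_mul (by positivity), Real.sqrt_mul (by positivity),
      Real.sqrt_inv, Real.sqrt_inv, Real.sqrt_inv]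
  have hsq1 : Real.sqrt ((1 / (N₁ : ℝ)) * E1) = (Real.sqrt N₁)⁻¹ * Real.sqrt E1 := by
    rw [one_div, Real.sqrt_mul (by positivity), Real.sqrt_inv]
  have hsq2 : Real.sqrt ((1 / (N₂ : ℝ)) * E2) = (Real.sqrt N₂)⁻¹ * Real.sqrt E2 := by
    rw [one_div, Real.sqrt_mul (by positivity), Real.sqrt_inv]
  have hsq3 : Real.sqrt ((1 / (N₃ : ℝ)) * E3) = (Real.sqrt N₃)⁻¹ * Real.sqrt E3 := by
    rw [one_div, Real.sqrt_mul (by positivity), Real.sqrt_inv]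
  have hinv1 : ((N₁ : ℝ))⁻¹ = (Real.sqrt N₁)⁻¹ * (Real.sqrt N₁)⁻¹ := by
    rw [← mul_inv, Real.mul_self_sqrt hn1.le]
  have hinv2 : ((N₂ : ℝ))⁻¹ = (Real.sqrt N₂)⁻¹ * (Real.sqrt N₂)⁻¹ := by
    rw [← mul_inv, Real.mul_self_sqrt hn2.le]
  have hinv3 : ((N₃ : ℝ))⁻¹ = (Real.sqrt N₃)⁻¹ * (Real.sqrt N₃)⁻¹ := by
    rw [← mul_inv, Real.mul_self_sqrt hn3.le]
  have hRHSeq : Real.sqrt L * Real.sqrt ((1 / ((N₁ : ℝ) * N₂ * N₃)) * SX)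
        * (Real.sqrt ((1 / (N₁ : ℝ)) * E1) * Real.sqrt ((1 / (N₂ : ℝ)) * E2)
          * Real.sqrt ((1 / (N₃ : ℝ)) * E3))
      = (1 / ((N₁ : ℝ) * N₂ * N₃))
        * (Real.sqrt L * (Real.sqrt SX * (Real.sqrt E1 * (Real.sqrt E2 * Real.sqrt E3)))) := by
    rw [hsq, hsq1, hsq2, hsq3, one_div, mul_inv, mul_inv, hinv1, hinv2, hinv3]
    ring
  rw [hRHSeq]
  exact mul_le_mul_of_nonneg_left core (by positivity)
end
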